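/- arXiv:0705.0256 — 4 statements merged into one kernel-verified Lean document; each statement's English description precedes it below -/
import Mathlib

section
/- Let U be a compact Hausdorff topological group with normalized Haar (probability) measure du, and K a closed subgroup with normalized Haar measure dk. Let F : U → ℂ be a continuous class function (F(u x u⁻¹) = F(x) for all u, x ∈ U), and define f : U → ℂ by f(u) = ∫_K F(u k) dk. Let (π, V) be a continuous finite-dimensional irreducible unitary representation of U of dimension d, with character χ(u) = tr π(u), whose space of K-fixed vectors V^K is one-dimensional, and let v₁ ∈ V^K be a unit vector with associated spherical function ψ(u) = ⟨π(u)v₁, v₁⟩. Then d · ∫_U f(u) · conj(ψ(u)) du = ∫_U F(u) · conj(χ(u)) du; that is, the spherical Fourier coefficient of the K-average f, multiplied by d, equals the character Fourier coefficient of F. -/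
/-!
Since `v₁` is `K`-fixed, `ψ` is right `K`-invariant, so by Fubini and right invariance of Haar
measure the `K`-average may be dropped: `∫ f ψ̄ = ∫ F ψ̄`. For a class function `F`, the operator
`A = ∫ F(u) π(u⁻¹) du` commutes with `π`, so by Schur's lemma `A = c · id`. Unitarity turns
`⟨A v₁, v₁⟩` into `∫ F ψ̄` and `tr A` into `∫ F χ̄`, whence `d · ∫ F ψ̄ = d c = tr A = ∫ F χ̄`.
-/

open MeasureTheory

open scoped InnerProductSpace ComplexConjugate

theorem MeasureTheory.Measure.isMulRightInvariant_of_isProbabilityMeasure {G : Type*} [Group G]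
    [TopologicalSpace G] [IsTopologicalGroup G] [LocallyCompactSpace G] [MeasurableSpace G]
    [BorelSpace G] (μ : Measure G) [μ.IsHaarMeasure] [IsProbabilityMeasure μ] :
    μ.IsMulRightInvariant where
  map_mul_right_eq_self g := by
    have : IsProbabilityMeasure (μ.map (· * g)) :=
      isProbabilityMeasure_map (measurable_mul_const g).aemeasurable
    exact Measure.isHaarMeasure_eq_of_isProbabilityMeasure _ μ

theorem MeasureTheory.integral_mul_mul_inv_eq_self {G E : Type*} [Group G] [MeasurableSpace G]
    [MeasurableMul G] [NormedAddCommGroup E] [NormedSpace ℝ E] (μ : Measure G)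
    [μ.IsMulLeftInvariant] [μ.IsMulRightInvariant] (f : G → E) (g : G) :
    ∫ x, f (g * x * g⁻¹) ∂μ = ∫ x, f x ∂μ := by
  rw [integral_mul_left_eq_self (fun x ↦ f (x * g⁻¹)) g, integral_mul_right_eq_self f g⁻¹]

theorem MeasureTheory.integral_integral_mul_subgroup_mul_eq {G 𝕜 : Type*} [Group G]
    [TopologicalSpace G] [IsTopologicalGroup G] [CompactSpace G] [MeasurableSpace G]
    [BorelSpace G] [RCLike 𝕜] (μ : Measure G) [IsFiniteMeasure μ] [μ.IsMulRightInvariant]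
    {K : Subgroup G} [CompactSpace K] (ν : Measure K) [IsProbabilityMeasure ν] {F ψ : G → 𝕜}
    (hF : Continuous F) (hψ : Continuous ψ) (hψK : ∀ g (k : K), ψ (g * k) = ψ g) :
    ∫ g, (∫ k, F (g * k) ∂ν) * ψ g ∂μ = ∫ g, F g * ψ g ∂μ := by
  have hcont : Continuous (Function.uncurry fun g (k : K) ↦ F (g * k) * ψ g) := by fun_prop
  calc ∫ g, (∫ k, F (g * k) ∂ν) * ψ g ∂μ = ∫ g, ∫ k, F (g * k) * ψ g ∂ν ∂μ := by
        simp only [integral_mul_const]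
    _ = ∫ k, ∫ g, F (g * k) * ψ g ∂μ ∂ν :=
        integral_integral_swap_of_hasCompactSupport hcont (.of_compactSpace _)
    _ = ∫ k : K, ∫ g, F g * ψ g ∂μ ∂ν := by
        congr 1 with k
        simpa only [hψK] using integral_mul_right_eq_self (fun g ↦ F g * ψ g) (k : G)
    _ = ∫ g, F g * ψ g ∂μ := by simp

namespace Representation

theorem exists_eq_smul_id_of_commute {G k V : Type*} [Monoid G] [Field k] [IsAlgClosed k]
    [AddCommGroup V] [Module k V] [FiniteDimensional k V] (π : Representation k G V)
    (hirred : ∀ T : Submodule k V, (∀ g, T.map (π g) ≤ T) → T = ⊥ ∨ T = ⊤)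
    {A : V →ₗ[k] V} (hA : ∀ g v, A (π g v) = π g (A v)) : ∃ c : k, A = c • LinearMap.id := by
  cases subsingleton_or_nontrivial V
  · exact ⟨0, Subsingleton.elim _ _⟩
  obtain ⟨c, hc⟩ := Module.End.exists_eigenvalue A
  have hinv : ∀ g, (Module.End.eigenspace A c).map (π g) ≤ Module.End.eigenspace A c := by
    rintro g _ ⟨v, hv, rfl⟩
    rw [SetLike.mem_coe, Module.End.mem_eigenspace_iff] at hv
    rw [Module.End.mem_eigenspace_iff, hA, hv, map_smul]
  have htop := (hirred _ hinv).resolve_left hc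
  exact ⟨c, LinearMap.ext fun v ↦ Module.End.mem_eigenspace_iff.mp (htop ▸ Submodule.mem_top)⟩

section Unitary

variable {G 𝕜 V : Type*} [Group G] [RCLike 𝕜] [NormedAddCommGroup V] [InnerProductSpace 𝕜 V]
  {π : Representation 𝕜 G V}

theorem inner_inv_apply_eq_conj (hπ : ∀ g x y, ⟪π g x, π g y⟫_𝕜 = ⟪x, y⟫_𝕜) (g : G) (x y : V) :
    ⟪x, π g⁻¹ y⟫_𝕜 = conj ⟪y, π g x⟫_𝕜 := by
  rw [← hπ g, self_inv_apply, inner_conj_symm]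

theorem trace_inv_eq_conj_trace [FiniteDimensional 𝕜 V]
    (hπ : ∀ g x y, ⟪π g x, π g y⟫_𝕜 = ⟪x, y⟫_𝕜) (g : G) :
    LinearMap.trace 𝕜 V (π g⁻¹) = conj (LinearMap.trace 𝕜 V (π g)) := by
  simp only [LinearMap.trace_eq_sum_inner _ (stdOrthonormalBasis 𝕜 V), map_sum,
    inner_inv_apply_eq_conj hπ]

end Unitary

section Averaging

variable {G V : Type*} [Group G] [TopologicalSpace G] [IsTopologicalGroup G] [CompactSpace G]
  [MeasurableSpace G] [BorelSpace G] [NormedAddCommGroup V] [InnerProductSpace ℂ V]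
  [FiniteDimensional ℂ V]

noncomputable def averagingOperator (μ : Measure G) (π : Representation ℂ G V) (F : G → ℂ) :
    V →L[ℂ] V :=
  ∫ g, F g • (π g⁻¹).toContinuousLinearMap ∂μ

variable {μ : Measure G} [IsFiniteMeasure μ] {π : Representation ℂ G V} {F : G → ℂ}
  (hπ : ∀ v, Continuous fun g ↦ π g v) (hF : Continuous F)
include hπ hF

theorem integrable_smul_toContinuousLinearMap_inv :
    Integrable (fun g ↦ F g • (π g⁻¹).toContinuousLinearMap) μ :=
  (hF.smul (continuous_clm_apply.mpr fun v ↦ (hπ v).comp continuous_inv))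
    |>.integrable_of_hasCompactSupport (.of_compactSpace _)

theorem integrable_smul_inv_apply (v : V) : Integrable (fun g ↦ F g • π g⁻¹ v) μ :=
  (integrable_smul_toContinuousLinearMap_inv hπ hF).apply_continuousLinearMap v

theorem averagingOperator_apply (v : V) :
    averagingOperator μ π F v = ∫ g, F g • π g⁻¹ v ∂μ := by
  rw [averagingOperator, ContinuousLinearMap.integral_apply
    (integrable_smul_toContinuousLinearMap_inv hπ hF)]
  rfl

theorem trace_averagingOperator :
    LinearMap.trace ℂ V (averagingOperator μ π F) =
      ∫ g, F g * LinearMap.trace ℂ V (π g⁻¹) ∂μ := by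
  let trL : (V →L[ℂ] V) →L[ℂ] ℂ :=
    ((LinearMap.trace ℂ V).comp (ContinuousLinearMap.coeLM ℂ)).toContinuousLinearMap
  have := trL.integral_comp_comm (integrable_smul_toContinuousLinearMap_inv (μ := μ) hπ hF)
  simpa [trL, averagingOperator] using this.symm

theorem averagingOperator_intertwines [μ.IsMulLeftInvariant] [μ.IsMulRightInvariant]
    (hFclass : ∀ g x, F (g * x * g⁻¹) = F x) (g : G) (v : V) :
    averagingOperator μ π F (π g v) = π g (averagingOperator μ π F v) := by
  let φ x := π g (F x • π x⁻¹ v)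
  have hφ : ∀ x, φ (g⁻¹ * x * g⁻¹⁻¹) = F x • π x⁻¹ (π g v) := fun x ↦ by
    have hFx := hFclass g⁻¹ x
    simp only [inv_inv] at hFx ⊢
    simp only [φ, hFx, map_smul, mul_inv_rev, inv_inv, map_mul, Module.End.mul_apply,
      self_inv_apply]
  calc averagingOperator μ π F (π g v) = ∫ x, φ (g⁻¹ * x * g⁻¹⁻¹) ∂μ := by
        simp only [averagingOperator_apply hπ hF, hφ]
    _ = ∫ x, φ x ∂μ := integral_mul_mul_inv_eq_self μ φ g⁻¹
    _ = π g (averagingOperator μ π F v) := by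
        rw [averagingOperator_apply hπ hF]
        exact (π g).toContinuousLinearMap.integral_comp_comm (integrable_smul_inv_apply hπ hF v)

theorem inner_averagingOperator_apply (hunitary : ∀ g x y, ⟪π g x, π g y⟫_ℂ = ⟪x, y⟫_ℂ)
    (v : V) : ⟪v, averagingOperator μ π F v⟫_ℂ = ∫ g, F g * conj ⟪v, π g v⟫_ℂ ∂μ := by
  rw [averagingOperator_apply hπ hF, ← integral_inner (integrable_smul_inv_apply hπ hF v)]
  simp only [inner_smul_right, inner_inv_apply_eq_conj hunitary]

end Averaging

end Representation

theorem dim_mul_spherical_coefficient_eq_character_coefficient_general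
    {U : Type*} [Group U] [TopologicalSpace U] [IsTopologicalGroup U]
    [CompactSpace U] [MeasurableSpace U] [BorelSpace U]
    (μ : Measure U) [μ.IsHaarMeasure] [IsProbabilityMeasure μ]
    (K : Subgroup U) (hK : IsClosed (K : Set U))
    (ν : Measure K) [IsProbabilityMeasure ν]
    (F : U → ℂ) (hFcont : Continuous F)
    (hFclass : ∀ u x : U, F (u * x * u⁻¹) = F x)
    {V : Type*} [NormedAddCommGroup V] [InnerProductSpace ℂ V] [FiniteDimensional ℂ V]
    (π : Representation ℂ U V)
    (hcont : ∀ v : V, Continuous fun u : U => π u v)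
    (hunitary : ∀ (u : U) (x y : V), (inner ℂ (π u x) (π u y) : ℂ) = inner ℂ x y)
    (hirred : ∀ T : Submodule ℂ V, (∀ u : U, T.map (π u) ≤ T) → T = ⊥ ∨ T = ⊤)
    (v₁ : V) (hv₁norm : ‖v₁‖ = 1)
    (hv₁fix : ∀ k : K, π (k : U) v₁ = v₁) :
    (Module.finrank ℂ V : ℂ) *
        ∫ u : U, (∫ k : K, F (u * (k : U)) ∂ν) * (starRingEnd ℂ) (inner ℂ v₁ (π u v₁) : ℂ) ∂μ
      = ∫ u : U, F u * (starRingEnd ℂ) (LinearMap.trace ℂ V (π u)) ∂μ := by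
  have := μ.isMulRightInvariant_of_isProbabilityMeasure
  have := isCompact_iff_compactSpace.mp hK.isCompact
  obtain ⟨c, hc⟩ := π.exists_eq_smul_id_of_commute hirred
    (Representation.averagingOperator_intertwines (μ := μ) hcont hFcont hFclass)
  have hψK (u : U) (k : K) : conj ⟪v₁, π (u * k) v₁⟫_ℂ = conj ⟪v₁, π u v₁⟫_ℂ := by
    rw [map_mul, Module.End.mul_apply, hv₁fix]
  have hv₁ : ⟪v₁, v₁⟫_ℂ = 1 := by simp [inner_self_eq_norm_sq_to_K, hv₁norm]
  calc (Module.finrank ℂ V : ℂ) * ∫ u, (∫ k : K, F (u * k) ∂ν) * conj ⟪v₁, π u v₁⟫_ℂ ∂μ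
      = Module.finrank ℂ V * ⟪v₁, π.averagingOperator μ F v₁⟫_ℂ := by
        rw [integral_integral_mul_subgroup_mul_eq μ ν hFcont (by fun_prop) hψK,
          π.inner_averagingOperator_apply hcont hFcont hunitary]
    _ = LinearMap.trace ℂ V (π.averagingOperator μ F) := by
        rw [← ContinuousLinearMap.coe_coe, hc, LinearMap.smul_apply, LinearMap.id_apply,
          inner_smul_right, hv₁, map_smul, LinearMap.trace_id, smul_eq_mul, mul_one, mul_comm]
    _ = ∫ u, F u * conj (LinearMap.trace ℂ V (π u)) ∂μ := by
        simp only [π.trace_averagingOperator hcont hFcont, π.trace_inv_eq_conj_trace hunitary]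

/-- Let `F` be a continuous class function on a compact group `U`, and let
`f(u) = ∫_K F(u k) dk` be its `K`-average. Let `(π, V)` be a continuous finite-dimensional
irreducible unitary representation of `U` of dimension `d`, with character `χ` and with
one-dimensional space of `K`-fixed vectors spanned by the unit vector `v₁`; let
`ψ(u) = ⟨π(u)v₁, v₁⟩` be the associated spherical function. Then
`d ⋅ ∫_U f ψ̄ du = ∫_U F χ̄ du`.
(The inner product `⟨a, b⟩` of the statement is linear in the *first* variable, so it is
`inner b a` in Mathlib's convention, which is conjugate-linear in the first variable.) -/
theorem dim_mul_spherical_coefficient_eq_character_coefficient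
    {U : Type*} [Group U] [TopologicalSpace U] [IsTopologicalGroup U]
    [CompactSpace U] [T2Space U] [MeasurableSpace U] [BorelSpace U]
    (μ : Measure U) [μ.IsHaarMeasure] [IsProbabilityMeasure μ]
    (K : Subgroup U) (hK : IsClosed (K : Set U))
    (ν : Measure K) [ν.IsHaarMeasure] [IsProbabilityMeasure ν]
    (F : U → ℂ) (hFcont : Continuous F)
    (hFclass : ∀ u x : U, F (u * x * u⁻¹) = F x)
    {V : Type*} [NormedAddCommGroup V] [InnerProductSpace ℂ V] [FiniteDimensional ℂ V]
    (π : Representation ℂ U V)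
    (hcont : ∀ v : V, Continuous fun u : U => π u v)
    (hunitary : ∀ (u : U) (x y : V), (inner ℂ (π u x) (π u y) : ℂ) = inner ℂ x y)
    (hirred : ∀ T : Submodule ℂ V, (∀ u : U, T.map (π u) ≤ T) → T = ⊥ ∨ T = ⊤)
    (v₁ : V) (hv₁norm : ‖v₁‖ = 1)
    (hv₁fix : ∀ k : K, π (k : U) v₁ = v₁)
    (hspan : ∀ v : V, (∀ k : K, π (k : U) v = v) → ∃ c : ℂ, v = c • v₁) :
    (Module.finrank ℂ V : ℂ) *
        ∫ u : U, (∫ k : K, F (u * (k : U)) ∂ν) * (starRingEnd ℂ) (inner ℂ v₁ (π u v₁) : ℂ) ∂μ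
      = ∫ u : U, F u * (starRingEnd ℂ) (LinearMap.trace ℂ V (π u)) ∂μ :=
  dim_mul_spherical_coefficient_eq_character_coefficient_general μ K hK ν F hFcont hFclass π hcont
    hunitary hirred v₁ hv₁norm hv₁fix
end

section
/- Let 0 < r < π and let f : ℝ → ℂ be a smooth 2π-periodic function whose support is contained in [−r, r] + 2πℤ. Define f̂(λ) = (1/2π) ∫_{−π}^{π} f(t) e^{−iλt} dt for λ ∈ ℂ. Then f̂ is an entire function on ℂ, and for every k ∈ ℕ there exists a constant C_k > 0 such that |f̂(λ)| ≤ C_k (1+|λ|)^{−k} e^{r|Im λ|} for all λ ∈ ℂ. -/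
/-!
Integrating by parts `k` times, with no boundary terms because `f` vanishes near `±π`, gives
`(iλ)^k ∫ f(t) e^{-iλt} dt = ∫ f⁽ᵏ⁾(t) e^{-iλt} dt`. Every `f⁽ᵏ⁾` is supported in `[-r, r]`
inside `[-π, π]`, where `|e^{-iλt}| = e^{t Im λ} ≤ e^{r |Im λ|}`; so both `f̂(λ)` and
`|λ|^k f̂(λ)` are `O(e^{r |Im λ|})`. Holomorphy is differentiation under the integral sign.
-/

open scoped Real Interval

open Complex MeasureTheory Set Filter Metric intervalIntegral

namespace LocalPaleyWiener

theorem norm_cexp_neg_I_mul (lam : ℂ) (t : ℝ) :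
    ‖cexp (-I * lam * t)‖ = Real.exp (lam.im * t) := by
  simp [norm_exp, mul_re, mul_im]

theorem norm_cexp_neg_I_mul_le {r t : ℝ} (lam : ℂ) (ht : |t| ≤ r) :
    ‖cexp (-I * lam * t)‖ ≤ Real.exp (r * |lam.im|) := by
  rw [norm_cexp_neg_I_mul, Real.exp_le_exp]
  calc lam.im * t ≤ |lam.im| * |t| := by rw [← abs_mul]; exact le_abs_self _
    _ ≤ r * |lam.im| := by rw [mul_comm r]; gcongr

theorem hasDerivAt_cexp_neg_I_mul_ofReal (lam : ℂ) (t : ℝ) :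
    HasDerivAt (fun s : ℝ => cexp (-I * lam * s)) (-I * lam * cexp (-I * lam * t)) t := by
  simpa [mul_comm] using ((ofRealCLM.hasDerivAt (x := t)).const_mul (-I * lam)).cexp

theorem hasDerivAt_cexp_neg_I_mul_param (t : ℝ) (lam : ℂ) :
    HasDerivAt (fun μ : ℂ => cexp (-I * μ * t)) (-I * t * cexp (-I * lam * t)) lam := by
  simpa [mul_comm] using (((hasDerivAt_id lam).const_mul (-I)).mul_const (t : ℂ)).cexp

theorem eq_zero_of_lt_abs_of_abs_lt {E : Type*} [Zero E] {f : ℝ → E} {r t : ℝ}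
    (hsupp : ∀ t : ℝ, (∀ m : ℤ, r < |t - 2 * π * m|) → f t = 0)
    (hr : r < |t|) (hπ : |t| < 2 * π - r) : f t = 0 := by
  refine hsupp t fun m => ?_
  rcases eq_or_ne m 0 with rfl | hm
  · simpa using hr
  · have hm' : (1 : ℝ) ≤ |(m : ℝ)| := by exact_mod_cast Int.one_le_abs hm
    have hshift : 2 * π ≤ |2 * π * m| := by
      rw [abs_mul, abs_of_pos Real.two_pi_pos]
      nlinarith [Real.two_pi_pos]
    have := abs_sub_abs_le_abs_sub (2 * π * m) t
    rw [abs_sub_comm] at this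
    linarith

theorem iteratedDeriv_eq_zero_of_eqOn_zero {𝕜 F : Type*} [NontriviallyNormedField 𝕜]
    [NormedAddCommGroup F] [NormedSpace 𝕜 F] {f : 𝕜 → F} {U : Set 𝕜} {x : 𝕜} (hU : IsOpen U)
    (hf : EqOn f 0 U) (hx : x ∈ U) (n : ℕ) : iteratedDeriv n f x = 0 := by
  simpa using ((eventuallyEq_of_mem (hU.mem_nhds hx) hf).iteratedDeriv n).eq_of_nhds

theorem iteratedDeriv_eq_zero_of_lt_abs_of_abs_lt {E : Type*} [NormedAddCommGroup E]
    [NormedSpace ℝ E] {f : ℝ → E} {r t : ℝ}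
    (hsupp : ∀ t : ℝ, (∀ m : ℤ, r < |t - 2 * π * m|) → f t = 0) (n : ℕ)
    (hr : r < |t|) (hπ : |t| < 2 * π - r) : iteratedDeriv n f t = 0 :=
  iteratedDeriv_eq_zero_of_eqOn_zero (U := {s | r < |s|} ∩ {s | |s| < 2 * π - r})
    ((isOpen_lt continuous_const continuous_abs).inter (isOpen_lt continuous_abs continuous_const))
    (fun _ hs => eq_zero_of_lt_abs_of_abs_lt hsupp hs.1 hs.2) ⟨hr, hπ⟩ n

theorem le_mul_one_add_zpow_neg {x y A B : ℝ} (k : ℕ) (hx : 0 ≤ x) (hy : 0 ≤ y) (h₀ : y ≤ A)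
    (hk : x ^ k * y ≤ B) : y ≤ 2 ^ (k - 1) * (A + B) * (1 + x) ^ (-(k : ℤ)) := by
  rw [zpow_neg, zpow_natCast, ← div_eq_mul_inv, le_div_iff₀ (by positivity)]
  calc y * (1 + x) ^ k ≤ y * (2 ^ (k - 1) * (1 ^ k + x ^ k)) := by
        gcongr; exact add_pow_le zero_le_one hx k
    _ = 2 ^ (k - 1) * (y + x ^ k * y) := by ring
    _ ≤ 2 ^ (k - 1) * (A + B) := by gcongr

section Integral

variable {g : ℝ → ℂ} {a b : ℝ}

theorem integral_deriv_mul_cexp (hg : Differentiable ℝ g)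
    (hg' : IntervalIntegrable (deriv g) volume a b) (ha : g a = 0) (hb : g b = 0) (lam : ℂ) :
    ∫ t in a..b, deriv g t * cexp (-I * lam * t) =
      I * lam * ∫ t in a..b, g t * cexp (-I * lam * t) := by
  have hparts := integral_mul_deriv_eq_deriv_mul (fun t _ => (hg t).hasDerivAt)
    (fun t _ => hasDerivAt_cexp_neg_I_mul_ofReal lam t) hg'
    (Continuous.intervalIntegrable (by fun_prop) a b)
  rw [ha, hb, zero_mul, zero_mul, sub_zero, zero_sub] at hparts
  have hpull : ∫ t in a..b, g t * (-I * lam * cexp (-I * lam * t)) =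
      -I * lam * ∫ t in a..b, g t * cexp (-I * lam * t) := by
    rw [← intervalIntegral.integral_const_mul]
    exact integral_congr fun t _ => by ring
  rw [hpull] at hparts
  linear_combination hparts

theorem integral_iteratedDeriv_mul_cexp {f : ℝ → ℂ} {n : ℕ} (hf : ContDiff ℝ n f)
    (ha : ∀ k < n, iteratedDeriv k f a = 0) (hb : ∀ k < n, iteratedDeriv k f b = 0) (lam : ℂ) :
    ∫ t in a..b, iteratedDeriv n f t * cexp (-I * lam * t) =
      (I * lam) ^ n * ∫ t in a..b, f t * cexp (-I * lam * t) := by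
  induction n with
  | zero => simp
  | succ n ih =>
    have hf' : ContDiff ℝ n f := hf.of_le (by exact_mod_cast n.le_succ)
    simp_rw [iteratedDeriv_succ]
    rw [integral_deriv_mul_cexp (hf.differentiable_iteratedDeriv' n)
      (by simpa only [← iteratedDeriv_succ] using
        (hf.continuous_iteratedDeriv' (n + 1)).intervalIntegrable a b)
      (ha n n.lt_succ_self) (hb n n.lt_succ_self),
      ih hf' (fun k hk => ha k (hk.trans n.lt_succ_self))
        (fun k hk => hb k (hk.trans n.lt_succ_self))]
    ring

theorem exists_norm_integral_mul_cexp_le {r : ℝ} (hg : ContinuousOn g [[a, b]])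
    (hsupp : ∀ t ∈ [[a, b]], r < |t| → g t = 0) :
    ∃ M > 0, ∀ lam : ℂ, ‖∫ t in a..b, g t * cexp (-I * lam * t)‖ ≤ M * Real.exp (r * |lam.im|) := by
  obtain ⟨C, hC⟩ := isCompact_uIcc.exists_bound_of_continuousOn hg
  refine ⟨|C| * |b - a| + 1, by positivity, fun lam => ?_⟩
  have hpointwise : ∀ t ∈ Ι a b, ‖g t * cexp (-I * lam * t)‖ ≤ |C| * Real.exp (r * |lam.im|) := by
    intro t ht
    by_cases htr : |t| ≤ r
    · rw [norm_mul]
      exact mul_le_mul ((hC t (uIoc_subset_uIcc ht)).trans (le_abs_self C))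
        (norm_cexp_neg_I_mul_le lam htr) (norm_nonneg _) (abs_nonneg C)
    · rw [hsupp t (uIoc_subset_uIcc ht) (not_le.mp htr), zero_mul, norm_zero]
      positivity
  calc ‖∫ t in a..b, g t * cexp (-I * lam * t)‖
      ≤ |C| * Real.exp (r * |lam.im|) * |b - a| := norm_integral_le_of_norm_le_const hpointwise
    _ ≤ (|C| * |b - a| + 1) * Real.exp (r * |lam.im|) := by
      nlinarith [Real.exp_pos (r * |lam.im|)]

theorem differentiable_integral_mul_cexp (hg : Continuous g) (a b : ℝ) :
    Differentiable ℂ fun lam : ℂ => ∫ t in a..b, g t * cexp (-I * lam * t) := by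
  intro lam₀
  let F' : ℂ → ℝ → ℂ := fun lam t => g t * (-I * t * cexp (-I * lam * t))
  have hF' : Continuous F'.uncurry := by fun_prop
  obtain ⟨C, hC⟩ := (isCompact_closedBall lam₀ 1 |>.prod isCompact_uIcc)
    |>.exists_bound_of_continuousOn (s := closedBall lam₀ 1 ×ˢ [[a, b]]) hF'.continuousOn
  have hcont : ∀ lam, Continuous fun t : ℝ => g t * cexp (-I * lam * t) := fun lam =>
    hg.mul (by fun_prop)
  refine (hasDerivAt_integral_of_dominated_loc_of_deriv_le (F' := F') (bound := fun _ => C)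
    (closedBall_mem_nhds lam₀ one_pos)
    (Eventually.of_forall fun lam => (hcont lam).aestronglyMeasurable)
    ((hcont lam₀).intervalIntegrable a b) (hF'.uncurry_left lam₀).aestronglyMeasurable
    (Eventually.of_forall fun t ht lam hlam => hC (lam, t) ⟨hlam, uIoc_subset_uIcc ht⟩)
    intervalIntegrable_const
    (Eventually.of_forall fun t _ lam _ =>
      (hasDerivAt_cexp_neg_I_mul_param t lam).const_mul (g t))).2.differentiableAt

end Integral

end LocalPaleyWiener

open LocalPaleyWiener

theorem local_paley_wiener_circle_forward_general
    (r : ℝ) (hrpi : r < Real.pi)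
    (f : ℝ → ℂ) (hsmooth : ContDiff ℝ (⊤ : ℕ∞) f)
    (hsupp : ∀ t : ℝ, (∀ m : ℤ, r < |t - 2 * Real.pi * m|) → f t = 0) :
    Differentiable ℂ (fun lam : ℂ =>
      (1 / (2 * Real.pi) : ℂ) *
        ∫ t in (-Real.pi)..Real.pi, f t * Complex.exp (-Complex.I * lam * t)) ∧
    ∀ k : ℕ, ∃ C : ℝ, 0 < C ∧ ∀ lam : ℂ,
      ‖(1 / (2 * Real.pi) : ℂ) *
          ∫ t in (-Real.pi)..Real.pi, f t * Complex.exp (-Complex.I * lam * t)‖ ≤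
        C * (1 + ‖lam‖) ^ (-(k : ℤ)) * Real.exp (r * |lam.im|) := by
  have hvanish (k : ℕ) {t : ℝ} (ht : r < |t|) (htπ : |t| ≤ π) : iteratedDeriv k f t = 0 :=
    iteratedDeriv_eq_zero_of_lt_abs_of_abs_lt hsupp k ht (by linarith)
  have hvanish_pi (k : ℕ) (t : ℝ) (ht : |t| = π) : iteratedDeriv k f t = 0 :=
    hvanish k (ht ▸ hrpi) ht.le
  have hbound (k : ℕ) : ∃ M > 0, ∀ lam : ℂ,
      ‖∫ t in (-π)..π, iteratedDeriv k f t * cexp (-I * lam * t)‖ ≤ M * Real.exp (r * |lam.im|) :=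
    exists_norm_integral_mul_cexp_le
      (hsmooth.continuous_iteratedDeriv k (by exact_mod_cast le_top)).continuousOn
      fun t ht hrt => hvanish k hrt (abs_le.2 (by simpa [uIcc_of_le, Real.pi_pos.le] using ht))
  refine ⟨(differentiable_integral_mul_cexp hsmooth.continuous _ _).const_mul _, fun k => ?_⟩
  obtain ⟨A, hA, hfA⟩ := hbound 0
  obtain ⟨B, hB, hfB⟩ := hbound k
  refine ⟨2 ^ (k - 1) * (A + B) / (2 * π), by positivity, fun lam => ?_⟩
  have hparts := integral_iteratedDeriv_mul_cexp (n := k) (hsmooth.of_le (by exact_mod_cast le_top))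
    (fun j _ => hvanish_pi j (-π) (by simp [Real.pi_pos.le]))
    (fun j _ => hvanish_pi j π (by simp [Real.pi_pos.le])) lam
  have hdecay := le_mul_one_add_zpow_neg k (norm_nonneg lam) (norm_nonneg _)
    (by simpa only [iteratedDeriv_zero] using hfA lam)
    (by simpa only [hparts, norm_mul, norm_pow, norm_I, one_mul] using hfB lam)
  calc ‖(1 / (2 * π) : ℂ) * ∫ t in (-π)..π, f t * cexp (-I * lam * t)‖
      = (2 * π)⁻¹ * ‖∫ t in (-π)..π, f t * cexp (-I * lam * t)‖ := by
        simp [Real.pi_pos.le]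
    _ ≤ (2 * π)⁻¹ * (2 ^ (k - 1) * (A * Real.exp (r * |lam.im|) + B * Real.exp (r * |lam.im|)) *
          (1 + ‖lam‖) ^ (-(k : ℤ))) := by gcongr
    _ = _ := by ring

/-- **Local Paley–Wiener theorem for the circle, forward direction.** If `f` is a smooth
`2π`-periodic function supported in `[-r, r] + 2πℤ` with `0 < r < π`, then its Fourier
transform `f̂(λ) = (1/2π)∫_{-π}^{π} f(t) e^{-iλt} dt` is entire and satisfies
`|f̂(λ)| ≤ C_k (1+|λ|)^{-k} e^{r|Im λ|}` for every `k`. -/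
theorem local_paley_wiener_circle_forward
    (r : ℝ) (hr0 : 0 < r) (hrpi : r < Real.pi)
    (f : ℝ → ℂ) (hsmooth : ContDiff ℝ (⊤ : ℕ∞) f)
    (hper : ∀ t : ℝ, f (t + 2 * Real.pi) = f t)
    (hsupp : ∀ t : ℝ, (∀ m : ℤ, r < |t - 2 * Real.pi * m|) → f t = 0) :
    Differentiable ℂ (fun lam : ℂ =>
      (1 / (2 * Real.pi) : ℂ) *
        ∫ t in (-Real.pi)..Real.pi, f t * Complex.exp (-Complex.I * lam * t)) ∧
    ∀ k : ℕ, ∃ C : ℝ, 0 < C ∧ ∀ lam : ℂ,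
      ‖(1 / (2 * Real.pi) : ℂ) *
          ∫ t in (-Real.pi)..Real.pi, f t * Complex.exp (-Complex.I * lam * t)‖ ≤
        C * (1 + ‖lam‖) ^ (-(k : ℤ)) * Real.exp (r * |lam.im|) :=
  local_paley_wiener_circle_forward_general r hrpi f hsmooth hsupp
end

section
/- Let 0 < r < π and let g : ℂ → ℂ be an entire function such that for every k ∈ ℕ there exists a constant C_k > 0 with |g(λ)| ≤ C_k (1+|λ|)^{−k} e^{r|Im λ|} for all λ ∈ ℂ. Then there exists a unique smooth 2π-periodic function f : ℝ → ℂ with support contained in [−r, r] + 2πℤ such that f̂(n) = g(n) for all n ∈ ℤ, where f̂(n) = (1/2π) ∫_{−π}^{π} f(t) e^{−int} dt. -/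
/-!
On the real line `g` decays faster than any power, so `H = 𝓕 (g ∘ ofReal)` is smooth. Shifting the
line of integration in `H x = ∫ e^{-2πi x ξ} g ξ dξ` to `Im ξ = ∓s` costs at most
`e^{(r - 2π|x|) s}`, so `H x = 0` as soon as `2π|x| > r` (the Paley–Wiener argument). Thus `H` has
compact support and Fourier inversion gives `𝓕⁻ H = g` on `ℝ`. Because `r < π`, `H` is supported
in `[-c, c]` with `c = r / 2π < 1/2`, hence its `1`-periodic extension is smooth, and
`f t = H (-t / 2π)`, extended `2π`-periodically, has `n`-th Fourier coefficient `𝓕⁻ H n = g n`.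
Uniqueness: a continuous periodic function whose Fourier coefficients all vanish has Fourier
series `0`, which converges to it.
-/

open MeasureTheory Filter Set Complex Topology FourierTransform Real

section Decay

theorem zpow_neg_two_le_inv_one_add_sq {a u : ℝ} (h : |a| ≤ u) :
    (1 + u) ^ (-2 : ℤ) ≤ (1 + a ^ 2)⁻¹ := by
  rw [zpow_neg, zpow_ofNat]
  gcongr
  nlinarith [abs_nonneg a, sq_abs a]

theorem abs_pow_mul_zpow_neg_le_inv_one_add_sq (a : ℝ) (k : ℕ) :
    |a| ^ k * (1 + |a|) ^ (-((k + 2 : ℕ) : ℤ)) ≤ (1 + a ^ 2)⁻¹ := by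
  have h : (0 : ℝ) < 1 + |a| := by positivity
  calc |a| ^ k * (1 + |a|) ^ (-((k + 2 : ℕ) : ℤ))
      ≤ (1 + |a|) ^ k * (1 + |a|) ^ (-((k + 2 : ℕ) : ℤ)) := by gcongr; linarith
    _ = (1 + |a|) ^ (-2 : ℤ) := by
        rw [← zpow_natCast, ← zpow_add₀ h.ne']; congr 1; push_cast; ring
    _ ≤ (1 + a ^ 2)⁻¹ := zpow_neg_two_le_inv_one_add_sq le_rfl

theorem tendsto_inv_one_add_sq_cocompact :
    Tendsto (fun a : ℝ => (1 + a ^ 2)⁻¹) (cocompact ℝ) (𝓝 0) := by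
  have h := tendsto_inv_atTop_zero.comp <| tendsto_atTop_add_const_left _ 1 <|
    (tendsto_pow_atTop two_ne_zero).comp (tendsto_norm_cocompact_atTop (E := ℝ))
  simpa only [Function.comp_def, Real.norm_eq_abs, sq_abs] using h

theorem integrable_norm_pow_mul_norm_of_norm_le {E : Type*} [NormedAddCommGroup E]
    {φ : ℝ → E} (hφ : Continuous φ) {C : ℝ} {k : ℕ}
    (hb : ∀ ξ : ℝ, ‖φ ξ‖ ≤ C * (1 + |ξ|) ^ (-((k + 2 : ℕ) : ℤ))) :
    Integrable fun ξ : ℝ => ‖ξ‖ ^ k * ‖φ ξ‖ := by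
  have hC : 0 ≤ C := by simpa using (norm_nonneg _).trans (hb 0)
  refine (integrable_inv_one_add_sq.const_mul C).mono' (by fun_prop)
    (Eventually.of_forall fun ξ => ?_)
  rw [norm_mul, norm_pow, norm_norm, norm_norm, Real.norm_eq_abs]
  calc |ξ| ^ k * ‖φ ξ‖ ≤ |ξ| ^ k * (C * (1 + |ξ|) ^ (-((k + 2 : ℕ) : ℤ))) := by
        gcongr; exact hb ξ
    _ = C * (|ξ| ^ k * (1 + |ξ|) ^ (-((k + 2 : ℕ) : ℤ))) := by ring
    _ ≤ C * (1 + ξ ^ 2)⁻¹ := by gcongr; exact abs_pow_mul_zpow_neg_le_inv_one_add_sq ξ k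

theorem norm_apply_add_mul_I_le_of_norm_le {g : ℂ → ℂ} {C r : ℝ}
    (hb : ∀ z, ‖g z‖ ≤ C * (1 + ‖z‖) ^ (-2 : ℤ) * Real.exp (r * |z.im|)) (a b : ℝ) :
    ‖g (a + b * I)‖ ≤ C * (1 + a ^ 2)⁻¹ * Real.exp (r * |b|) := by
  have hC : 0 ≤ C := by simpa using (norm_nonneg _).trans (hb 0)
  have h : (1 + ‖(a + b * I : ℂ)‖) ^ (-2 : ℤ) ≤ (1 + a ^ 2)⁻¹ :=
    zpow_neg_two_le_inv_one_add_sq (by simpa using abs_re_le_norm (a + b * I : ℂ))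
  refine (hb _).trans ?_
  simpa using mul_le_mul_of_nonneg_right (mul_le_mul_of_nonneg_left h hC)
    (Real.exp_pos (r * |b|)).le

end Decay

section ContourShift

variable {E : Type*} [NormedAddCommGroup E]

theorem integrable_comp_add_mul_I_of_norm_le {F : ℂ → E} (hF : Continuous F) {y M : ℝ}
    (hM : ∀ a : ℝ, ‖F (a + y * I)‖ ≤ M * (1 + a ^ 2)⁻¹) :
    Integrable fun a : ℝ => F (a + y * I) :=
  (integrable_inv_one_add_sq.const_mul M).mono' (hF.comp (by fun_prop)).aestronglyMeasurable
    (Eventually.of_forall hM)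

theorem tendsto_intervalIntegral_comp_add_mul_I_cocompact [NormedSpace ℝ E] {F : ℂ → E}
    {σ M : ℝ} (hM : ∀ a : ℝ, ∀ y ∈ uIcc 0 σ, ‖F (a + y * I)‖ ≤ M * (1 + a ^ 2)⁻¹) :
    Tendsto (fun a : ℝ => ∫ y in 0..σ, F (a + y * I)) (cocompact ℝ) (𝓝 0) := by
  refine squeeze_zero_norm (fun a => ?_) (by simpa using
    (tendsto_inv_one_add_sq_cocompact.const_mul M).mul_const |σ|)
  simpa using intervalIntegral.norm_integral_le_of_norm_le_const
    fun y hy => hM a y (uIoc_subset_uIcc hy)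

/-- Cauchy's theorem on the rectangles `[-A, A] × [0, σ]`, with `A → ∞`. -/
theorem integral_comp_add_mul_I_eq_integral_of_norm_le [NormedSpace ℂ E] [CompleteSpace E]
    {F : ℂ → E} (hF : Differentiable ℂ F) {σ M : ℝ}
    (hM : ∀ a : ℝ, ∀ y ∈ uIcc 0 σ, ‖F (a + y * I)‖ ≤ M * (1 + a ^ 2)⁻¹) :
    ∫ a : ℝ, F (a + σ * I) = ∫ a : ℝ, F a := by
  have hrect : ∀ A : ℝ, (((∫ a in -A..A, F (a + (0 : ℝ) * I)) - ∫ a in -A..A, F (a + σ * I)) +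
      I • ∫ y in 0..σ, F (A + y * I)) - I • ∫ y in 0..σ, F (-A + y * I) = 0 := fun A => by
    simpa using integral_boundary_rect_eq_zero_of_differentiableOn F (-A) (A + σ * I)
      hF.differentiableOn
  have hline : ∀ y ∈ uIcc 0 σ, Tendsto (fun A : ℝ => ∫ a in -A..A, F (a + y * I)) atTop
      (𝓝 (∫ a : ℝ, F (a + y * I))) := fun y hy =>
    intervalIntegral_tendsto_integral
      (integrable_comp_add_mul_I_of_norm_le hF.continuous (hM · y hy))
      tendsto_neg_atTop_atBot tendsto_id
  have hvert := tendsto_intervalIntegral_comp_add_mul_I_cocompact hM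
  have hlim := (((hline 0 left_mem_uIcc).sub (hline σ right_mem_uIcc)).add
    ((hvert.comp (tendsto_id.mono_right atTop_le_cocompact)).const_smul I)).sub
    ((hvert.comp (tendsto_neg_atTop_atBot.mono_right atBot_le_cocompact)).const_smul I)
  have := tendsto_nhds_unique (hlim.congr fun A => by simpa using hrect A) tendsto_const_nhds
  simp only [ofReal_zero, zero_mul, add_zero, smul_zero, sub_zero] at this
  exact (sub_eq_zero.mp this).symm

theorem norm_integral_le_of_norm_le_exp [NormedSpace ℂ E] [CompleteSpace E] {F : ℂ → E}
    (hF : Differentiable ℂ F) {C α β : ℝ}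
    (hb : ∀ a b : ℝ, ‖F (a + b * I)‖ ≤ C * (1 + a ^ 2)⁻¹ * Real.exp (α * |b| + β * b))
    (σ : ℝ) : ‖∫ a : ℝ, F a‖ ≤ C * π * Real.exp (α * |σ| + β * σ) := by
  have hC : 0 ≤ C := by simpa using (norm_nonneg _).trans (hb 0 0)
  have hstrip : ∀ a : ℝ, ∀ y ∈ uIcc 0 σ, ‖F (a + y * I)‖ ≤
      C * Real.exp ((|α| + |β|) * |σ|) * (1 + a ^ 2)⁻¹ := by
    intro a y hy
    have hy' : |y| ≤ |σ| := by simpa using abs_sub_left_of_mem_uIcc hy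
    have hα : α * |y| ≤ |α| * |σ| :=
      (mul_le_mul_of_nonneg_right (le_abs_self α) (abs_nonneg y)).trans
        (mul_le_mul_of_nonneg_left hy' (abs_nonneg α))
    have hβ : β * y ≤ |β| * |σ| := (le_abs_self _).trans
      ((abs_mul β y).trans_le (mul_le_mul_of_nonneg_left hy' (abs_nonneg β)))
    calc ‖F (a + y * I)‖ ≤ C * (1 + a ^ 2)⁻¹ * Real.exp (α * |y| + β * y) := hb a y
      _ ≤ C * (1 + a ^ 2)⁻¹ * Real.exp ((|α| + |β|) * |σ|) := by gcongr; linarith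
      _ = _ := by ring
  rw [← integral_comp_add_mul_I_eq_integral_of_norm_le hF hstrip]
  calc ‖∫ a : ℝ, F (a + σ * I)‖
      ≤ ∫ a : ℝ, C * Real.exp (α * |σ| + β * σ) * (1 + a ^ 2)⁻¹ :=
        norm_integral_le_of_norm_le (integrable_inv_one_add_sq.const_mul _)
          (Eventually.of_forall fun a => (hb a σ).trans_eq (by ring))
    _ = C * π * Real.exp (α * |σ| + β * σ) := by
        rw [integral_const_mul, integral_univ_inv_one_add_sq]; ring

/-- Shift the line of integration to `Im z = -s · sign β` and let `s → ∞`. -/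
theorem integral_eq_zero_of_norm_le_exp [NormedSpace ℂ E] [CompleteSpace E] {F : ℂ → E}
    (hF : Differentiable ℂ F) {C α β : ℝ}
    (hb : ∀ a b : ℝ, ‖F (a + b * I)‖ ≤ C * (1 + a ^ 2)⁻¹ * Real.exp (α * |b| + β * b))
    (hαβ : α < |β|) : ∫ a : ℝ, F a = 0 := by
  have hshift : ∀ s : ℝ, 0 ≤ s → ‖∫ a : ℝ, F a‖ ≤ C * π * Real.exp (s * (α - |β|)) := by
    intro s hs
    rcases le_or_gt 0 β with h | h
    · convert norm_integral_le_of_norm_le_exp hF hb (-s) using 3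
      rw [abs_neg, abs_of_nonneg hs, abs_of_nonneg h]; ring
    · convert norm_integral_le_of_norm_le_exp hF hb s using 3
      rw [abs_of_nonneg hs, abs_of_neg h]; ring
  have hlim : Tendsto (fun s : ℝ => C * π * Real.exp (s * (α - |β|))) atTop (𝓝 0) := by
    simpa using (Real.tendsto_exp_atBot.comp
      (tendsto_id.atTop_mul_const_of_neg (sub_neg.mpr hαβ))).const_mul (C * π)
  exact norm_le_zero_iff.mp (ge_of_tendsto hlim (eventually_atTop.mpr ⟨0, hshift⟩))

end ContourShift

theorem fourier_eq_zero_of_norm_le {g : ℂ → ℂ} (hg : Differentiable ℂ g) {r C : ℝ}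
    (hb : ∀ a b : ℝ, ‖g (a + b * I)‖ ≤ C * (1 + a ^ 2)⁻¹ * Real.exp (r * |b|))
    {x : ℝ} (hx : r < 2 * π * |x|) :
    𝓕 (fun ξ : ℝ => g ξ) x = 0 := by
  have hexp : ∀ a b : ℝ, ‖cexp (-2 * π * x * (a + b * I) * I)‖ = Real.exp (2 * π * x * b) :=
    fun a b => by rw [Complex.norm_exp]; congr 1; simp
  have hFb : ∀ a b : ℝ, ‖cexp (-2 * π * x * (a + b * I) * I) * g (a + b * I)‖ ≤
      C * (1 + a ^ 2)⁻¹ * Real.exp (r * |b| + 2 * π * x * b) := fun a b => by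
    rw [norm_mul, hexp, Real.exp_add]
    nlinarith [hb a b, Real.exp_pos (2 * π * x * b)]
  have hx' : r < |2 * π * x| := by rwa [abs_mul, abs_of_pos two_pi_pos]
  have hF : Differentiable ℂ fun z => cexp (-2 * π * x * z * I) * g z := by fun_prop
  rw [Real.fourier_eq', ← integral_eq_zero_of_norm_le_exp hF hFb hx']
  congr 1 with v
  simp only [smul_eq_mul, Real.inner_apply]
  push_cast
  ring_nf

section Restriction

variable {g : ℂ → ℂ} {r : ℝ}

theorem integrable_norm_pow_mul_norm_restrict (hg : Continuous g)
    (hdecay : ∀ k : ℕ, ∃ C : ℝ, ∀ z : ℂ,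
      ‖g z‖ ≤ C * (1 + ‖z‖) ^ (-(k : ℤ)) * Real.exp (r * |z.im|))
    (k : ℕ) : Integrable fun ξ : ℝ => ‖ξ‖ ^ k * ‖g ξ‖ := by
  obtain ⟨C, hC⟩ := hdecay (k + 2)
  exact integrable_norm_pow_mul_norm_of_norm_le (hg.comp continuous_ofReal)
    fun ξ => by simpa using hC ξ

theorem contDiff_fourier_restrict (hg : Continuous g)
    (hdecay : ∀ k : ℕ, ∃ C : ℝ, ∀ z : ℂ,
      ‖g z‖ ≤ C * (1 + ‖z‖) ^ (-(k : ℤ)) * Real.exp (r * |z.im|)) :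
    ContDiff ℝ (⊤ : ℕ∞) (𝓕 fun ξ : ℝ => g ξ) :=
  Real.contDiff_fourier fun k _ => integrable_norm_pow_mul_norm_restrict hg hdecay k

theorem fourier_restrict_eq_zero (hg : Differentiable ℂ g)
    (hdecay : ∀ k : ℕ, ∃ C : ℝ, ∀ z : ℂ,
      ‖g z‖ ≤ C * (1 + ‖z‖) ^ (-(k : ℤ)) * Real.exp (r * |z.im|))
    {x : ℝ} (hx : r < 2 * π * |x|) : 𝓕 (fun ξ : ℝ => g ξ) x = 0 := by
  obtain ⟨C, hC⟩ := hdecay 2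
  exact fourier_eq_zero_of_norm_le hg (norm_apply_add_mul_I_le_of_norm_le (by exact_mod_cast hC)) hx

theorem fourierInv_fourier_restrict (hg : Differentiable ℂ g)
    (hdecay : ∀ k : ℕ, ∃ C : ℝ, ∀ z : ℂ,
      ‖g z‖ ≤ C * (1 + ‖z‖) ^ (-(k : ℤ)) * Real.exp (r * |z.im|)) :
    𝓕⁻ (𝓕 fun ξ : ℝ => g ξ) = fun ξ : ℝ => g ξ := by
  have hcont : Continuous fun ξ : ℝ => g ξ := hg.continuous.comp continuous_ofReal
  have hint : Integrable fun ξ : ℝ => g ξ := by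
    refine (integrable_norm_iff hcont.aestronglyMeasurable).mp ?_
    simpa using integrable_norm_pow_mul_norm_restrict hg.continuous hdecay 0
  have hsupp : HasCompactSupport (𝓕 fun ξ : ℝ => g ξ) :=
    HasCompactSupport.intro (isCompact_closedBall 0 (r / (2 * π))) fun x hx =>
      fourier_restrict_eq_zero hg hdecay <| by
        rwa [Metric.mem_closedBall, not_le, Real.dist_0_eq_abs, div_lt_iff₀' two_pi_pos] at hx
  exact hcont.fourierInv_fourier_eq hint
    ((contDiff_fourier_restrict hg.continuous hdecay).continuous.integrable_of_hasCompactSupport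
      hsupp)

end Restriction

section PeriodicExtension

variable {E : Type*}

noncomputable def periodicExtension (K : ℝ → E) (x : ℝ) : E := K (x - round x)

theorem periodic_periodicExtension (K : ℝ → E) : Function.Periodic (periodicExtension K) 1 := by
  intro x
  simp only [periodicExtension, round_add_one, Int.cast_add, Int.cast_one,
    add_sub_add_right_eq_sub]

variable {K : ℝ → E} {c : ℝ}

theorem periodicExtension_eq_zero [Zero E] (hK : ∀ u, c < |u| → K u = 0) {x : ℝ}
    (hx : ∀ m : ℤ, c < |x - m|) : periodicExtension K x = 0 :=
  hK _ (hx _)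

theorem periodicExtension_neg_div_eq_zero [Zero E] {T : ℝ} (hT : 0 < T)
    (hK : ∀ u, c / T < |u| → K u = 0) {t : ℝ} (ht : ∀ m : ℤ, c < |t - T * m|) :
    periodicExtension K (-t / T) = 0 :=
  periodicExtension_eq_zero hK fun m => by
    rw [show -t / T - m = -((t - T * ((-m : ℤ) : ℝ)) / T) by push_cast; field_simp; ring,
      abs_neg, abs_div, abs_of_pos hT]
    exact div_lt_div_of_pos_right (ht (-m)) hT

/-- If `k ≠ m` then `|x - k| + |x - m| ≥ 1`, so both translates vanish at `x`. -/
theorem apply_sub_intCast_eq_of_abs_le [Zero E] (hK : ∀ u, c < |u| → K u = 0)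
    {x : ℝ} {k m : ℤ} (hk : |x - k| ≤ 1 / 2) (hm : |x - m| < 1 - c) :
    K (x - k) = K (x - m) := by
  rcases eq_or_ne k m with rfl | hkm
  · rfl
  have h1 : (1 : ℝ) ≤ |(k : ℝ) - m| := by exact_mod_cast Int.one_le_abs (sub_ne_zero.mpr hkm)
  have h2 : |(k : ℝ) - m| ≤ |x - m| + |x - k| := by simpa using abs_sub (x - m) (x - k)
  rw [hK _ (by linarith), hK _ (by linarith)]

theorem periodicExtension_eq_self [Zero E] (hK : ∀ u, c < |u| → K u = 0) (hc : c < 1 / 2)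
    {x : ℝ} (hx : |x| ≤ 1 / 2) : periodicExtension K x = K x := by
  simpa [periodicExtension] using apply_sub_intCast_eq_of_abs_le hK (abs_sub_round x) (m := 0)
    (by simp only [Int.cast_zero, sub_zero]; linarith)

theorem contDiff_periodicExtension [NormedAddCommGroup E] [NormedSpace ℝ E] {n : WithTop ℕ∞}
    (hK : ∀ u, c < |u| → K u = 0) (hc : c < 1 / 2) (hKs : ContDiff ℝ n K) :
    ContDiff ℝ n (periodicExtension K) := by
  refine contDiff_iff_contDiffAt.mpr fun x₀ => ?_
  have hloc : periodicExtension K =ᶠ[𝓝 x₀] fun x => K (x - round x₀) := by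
    filter_upwards [Metric.ball_mem_nhds x₀ (sub_pos.mpr hc)] with x hx
    rw [Metric.mem_ball, Real.dist_eq] at hx
    refine apply_sub_intCast_eq_of_abs_le hK (abs_sub_round x) ?_
    calc |x - round x₀| ≤ |x - x₀| + |x₀ - round x₀| := abs_sub_le _ _ _
      _ < (1 / 2 - c) + 1 / 2 := add_lt_add_of_lt_of_le hx (abs_sub_round x₀)
      _ = 1 - c := by ring
  exact (hKs.comp (contDiff_id.sub contDiff_const)).contDiffAt.congr_of_eventuallyEq hloc

end PeriodicExtension

section FourierCoefficients

theorem eq_zero_of_integral_mul_cexp_eq_zero {f : ℝ → ℂ} (hf : Continuous f)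
    (hper : Function.Periodic f (2 * π))
    (h : ∀ n : ℤ, ∫ t in -π..π, f t * cexp (-I * n * t) = 0) : f = 0 := by
  have : Fact (0 < 2 * π) := ⟨two_pi_pos⟩
  let F : C(AddCircle (2 * π), ℂ) := ⟨hper.lift, continuous_coinduced_dom.mpr hf⟩
  have hF : fourierCoeff F = 0 := funext fun n => by
    have hint : ∀ t : ℝ, fourier (-n) (t : AddCircle (2 * π)) • F t = f t * cexp (-I * n * t) :=
      fun t => by
        rw [smul_eq_mul, fourier_coe_apply, mul_comm]
        congr 2
        have : (π : ℂ) ≠ 0 := ofReal_ne_zero.mpr pi_ne_zero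
        push_cast
        field_simp
    rw [fourierCoeff_eq_intervalIntegral _ n (-π), show -π + 2 * π = π by ring,
      intervalIntegral.integral_congr fun t _ => hint t, h n, smul_zero, Pi.zero_apply]
  have hsum := has_pointwise_sum_fourier_series_of_summable (f := F)
    (by rw [hF]; exact summable_zero)
  funext t
  simp only [hF, Pi.zero_apply, zero_smul] at hsum
  exact (hsum t).unique hasSum_zero

theorem eq_of_integral_mul_cexp_eq {f₁ f₂ : ℝ → ℂ} (hf₁ : Continuous f₁) (hf₂ : Continuous f₂)
    (hp₁ : Function.Periodic f₁ (2 * π)) (hp₂ : Function.Periodic f₂ (2 * π))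
    (h : ∀ n : ℤ,
      ∫ t in -π..π, f₁ t * cexp (-I * n * t) = ∫ t in -π..π, f₂ t * cexp (-I * n * t)) :
    f₁ = f₂ := by
  refine sub_eq_zero.mp <|
    eq_zero_of_integral_mul_cexp_eq_zero (hf₁.sub hf₂) (hp₁.sub hp₂) fun n => ?_
  have hint : ∀ f : ℝ → ℂ, Continuous f →
      IntervalIntegrable (fun t => f t * cexp (-I * n * t)) volume (-π) π :=
    fun f hf => (by fun_prop : Continuous _).intervalIntegrable _ _
  simp_rw [Pi.sub_apply, sub_mul]
  rw [intervalIntegral.integral_sub (hint f₁ hf₁) (hint f₂ hf₂), h n, sub_self]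

theorem fourierInv_eq_intervalIntegral {K : ℝ → ℂ} (hK : ∀ u, 1 / 2 ≤ |u| → K u = 0) (w : ℝ) :
    𝓕⁻ K w = ∫ u in -(1 / 2)..1 / 2, cexp (2 * π * I * w * u) * K u := by
  rw [intervalIntegral.integral_of_le (by norm_num), fourierInv_eq',
    ← setIntegral_eq_integral_of_forall_compl_eq_zero fun u hu => ?_]
  · congr 1 with u
    simp only [smul_eq_mul, Real.inner_apply]
    push_cast
    ring_nf
  · have : 1 / 2 ≤ |u| := by
      rw [mem_Ioc, not_and_or, not_lt, not_le] at hu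
      rcases hu with hu | hu
      · exact (by linarith : (1 : ℝ) / 2 ≤ -u).trans (neg_le_abs u)
      · exact hu.le.trans (le_abs_self u)
    simp only [hK u this, smul_zero]

theorem integral_periodicExtension_mul_cexp {K : ℝ → ℂ} {c : ℝ}
    (hK : ∀ u, c < |u| → K u = 0) (hc : c < 1 / 2) (n : ℤ) :
    (1 / (2 * π) : ℂ) * ∫ t in -π..π, periodicExtension K (-t / (2 * π)) * cexp (-I * n * t) =
      𝓕⁻ K n := by
  set G : ℝ → ℂ := fun u => cexp (2 * π * I * n * u) * K u
  have hπ : (π : ℂ) ≠ 0 := ofReal_ne_zero.mpr pi_ne_zero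
  have hrescale : ∀ t ∈ uIcc (-π) π,
      periodicExtension K (-t / (2 * π)) * cexp (-I * n * t) = G (t / -(2 * π)) := by
    intro t ht
    have ht' : |-t / (2 * π)| ≤ 1 / 2 := by
      rw [abs_div, abs_neg, abs_of_pos two_pi_pos, div_le_iff₀ two_pi_pos]
      have := abs_le.mpr (uIcc_of_le (neg_le_self pi_pos.le) ▸ ht)
      linarith
    rw [periodicExtension_eq_self hK hc ht', mul_comm, div_neg, neg_div]
    congr 2
    push_cast
    field_simp
  rw [intervalIntegral.integral_congr hrescale,
    intervalIntegral.integral_comp_div G (neg_ne_zero.mpr two_pi_pos.ne'),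
    show -π / -(2 * π) = 1 / 2 by field_simp, show π / -(2 * π) = -(1 / 2) by field_simp,
    intervalIntegral.integral_symm, fourierInv_eq_intervalIntegral fun u hu => hK u (by linarith),
    smul_neg, neg_smul, neg_neg, real_smul, ← mul_assoc]
  push_cast
  rw [div_mul_cancel₀ _ (by simp [hπ]), one_mul]

end FourierCoefficients

theorem local_paley_wiener_circle_inverse_general
    (r : ℝ) (hrpi : r < Real.pi)
    (g : ℂ → ℂ) (hg : Differentiable ℂ g)
    (hdecay : ∀ k : ℕ, ∃ C : ℝ, 0 < C ∧ ∀ lam : ℂ,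
      ‖g lam‖ ≤ C * (1 + ‖lam‖) ^ (-(k : ℤ)) * Real.exp (r * |lam.im|)) :
    ∃! f : ℝ → ℂ,
      (ContDiff ℝ (⊤ : ℕ∞) f ∧
        (∀ t : ℝ, f (t + 2 * Real.pi) = f t) ∧
        (∀ t : ℝ, (∀ m : ℤ, r < |t - 2 * Real.pi * m|) → f t = 0)) ∧
      ∀ n : ℤ, (1 / (2 * Real.pi) : ℂ) *
          ∫ t in (-Real.pi)..Real.pi, f t * Complex.exp (-Complex.I * n * t) = g n := by
  have hdecay' := fun k => (hdecay k).imp fun _ h => h.2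
  set H := 𝓕 fun ξ : ℝ => g ξ
  have hH : ∀ u, r / (2 * π) < |u| → H u = 0 := fun u hu =>
    fourier_restrict_eq_zero hg hdecay' (by rwa [div_lt_iff₀' two_pi_pos] at hu)
  have hc : r / (2 * π) < 1 / 2 := by rw [div_lt_iff₀ two_pi_pos]; linarith
  set f : ℝ → ℂ := fun t => periodicExtension H (-t / (2 * π))
  have hsmooth : ContDiff ℝ (⊤ : ℕ∞) f :=
    (contDiff_periodicExtension hH hc (contDiff_fourier_restrict hg.continuous hdecay')).comp
      (contDiff_neg.div_const _)
  have hper : Function.Periodic f (2 * π) := by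
    simpa [f, div_neg, neg_div] using ((periodic_periodicExtension H).div_const (-(2 * π))).neg
  have hsupp : ∀ t : ℝ, (∀ m : ℤ, r < |t - 2 * π * m|) → f t = 0 := fun t =>
    periodicExtension_neg_div_eq_zero two_pi_pos hH
  have hcoeff : ∀ n : ℤ, (1 / (2 * π) : ℂ) * ∫ t in -π..π, f t * cexp (-I * n * t) = g n :=
    fun n => by
      rw [integral_periodicExtension_mul_cexp hH hc, fourierInv_fourier_restrict hg hdecay']
      exact congrArg g (ofReal_intCast n)
  refine ⟨f, ⟨⟨hsmooth, hper, hsupp⟩, hcoeff⟩, ?_⟩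
  rintro f' ⟨⟨hf', hper', -⟩, hcoeff'⟩
  refine eq_of_integral_mul_cexp_eq hf'.continuous hsmooth.continuous hper' hper fun n => ?_
  exact mul_left_cancel₀ (by simp [pi_ne_zero]) ((hcoeff' n).trans (hcoeff n).symm)

/-- **Local Paley–Wiener theorem for the circle, inverse direction.** Let `0 < r < π` and
let `g` be entire with `|g(λ)| ≤ C_k (1+|λ|)^{-k} e^{r|Im λ|}` for every `k`. Then there is a
unique smooth `2π`-periodic function `f` supported in `[-r, r] + 2πℤ` whose Fourier
coefficients `f̂(n) = (1/2π)∫_{-π}^{π} f(t) e^{-int} dt` satisfy `f̂(n) = g(n)` for all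
`n ∈ ℤ`. -/
theorem local_paley_wiener_circle_inverse
    (r : ℝ) (hr0 : 0 < r) (hrpi : r < Real.pi)
    (g : ℂ → ℂ) (hg : Differentiable ℂ g)
    (hdecay : ∀ k : ℕ, ∃ C : ℝ, 0 < C ∧ ∀ lam : ℂ,
      ‖g lam‖ ≤ C * (1 + ‖lam‖) ^ (-(k : ℤ)) * Real.exp (r * |lam.im|)) :
    ∃! f : ℝ → ℂ,
      (ContDiff ℝ (⊤ : ℕ∞) f ∧
        (∀ t : ℝ, f (t + 2 * Real.pi) = f t) ∧
        (∀ t : ℝ, (∀ m : ℤ, r < |t - 2 * Real.pi * m|) → f t = 0)) ∧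
      ∀ n : ℤ, (1 / (2 * Real.pi) : ℂ) *
          ∫ t in (-Real.pi)..Real.pi, f t * Complex.exp (-Complex.I * n * t) = g n :=
  local_paley_wiener_circle_inverse_general r hrpi g hg hdecay
end

section
/- Let 0 < r < π. Suppose g₁, g₂ : ℂ → ℂ are entire functions such that for every k ∈ ℕ there exist constants C_k > 0 with |gⱼ(λ)| ≤ C_k (1+|λ|)^{−k} e^{r|Im λ|} for all λ ∈ ℂ and j = 1, 2. If g₁(l) = g₂(l) for all l ∈ ℤ≥0, then g₁ = g₂. Equivalently, an entire function of this type is uniquely determined by its values at the nonnegative integers. -/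
/-!
The difference `h = g₁ - g₂` satisfies `‖h z‖ ≤ C e^{r |Im z|}` and vanishes on `ℕ`, so
`q = h / sin (π z)` extends holomorphically to `Re z > -1`. Since `‖sin (π z)‖ ≥ c e^{π |Im z|}`
away from `ℤ`, and by the maximum modulus principle on the discs around the points of `ℕ`,
`‖q z‖ ≤ K e^{(r - π) |Im z|}` on the closed right half-plane. Multiplying `q` by
`exp (-a (z + 1) log (z + 1))` with `a π / 2 = π - r` gives a function that is bounded on the
closed right half-plane and decays superexponentially along `ℝ₊`; by Phragmén–Lindelöf it
vanishes, hence so do `q` and `h` (Carlson's theorem).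
-/

open Filter Set Metric Asymptotics
open scoped Real Topology

namespace Real

theorem two_mul_abs_le_abs_sin_pi_mul {x : ℝ} (hx : |x| ≤ 1 / 2) : 2 * |x| ≤ |sin (π * x)| := by
  have jordan : ∀ t, 0 ≤ t → t ≤ 1 / 2 → 2 * t ≤ sin (π * t) := fun t ht0 ht ↦ by
    have := mul_le_sin (x := π * t) (by positivity) (by nlinarith [pi_pos])
    rwa [← mul_assoc, div_mul_cancel₀ _ pi_ne_zero] at this
  rcases le_total 0 x with hx0 | hx0
  · rw [abs_of_nonneg hx0] at hx ⊢
    exact (jordan x hx0 hx).trans (le_abs_self _)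
  · rw [abs_of_nonpos hx0] at hx ⊢
    have := jordan (-x) (neg_nonneg.2 hx0) hx
    rw [mul_neg π, sin_neg] at this
    exact this.trans (neg_le_abs _)

theorem mul_exp_le_sinh {s t : ℝ} (hst : s ≤ t) : (1 - exp (-2 * s)) / 2 * exp t ≤ sinh t := by
  have : exp (-t) ≤ exp (-2 * s) * exp t := by
    rw [← exp_add]; exact exp_le_exp.2 (by linarith)
  rw [sinh_eq]; linarith

theorem superpolynomialDecay_exp_neg_mul_mul_log_add_one {a : ℝ} (ha : 0 < a) :
    SuperpolynomialDecay atTop exp fun x ↦ exp (-a * ((x + 1) * log (x + 1))) := by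
  intro n
  have hx1 : Tendsto (fun x : ℝ ↦ x + 1) atTop atTop := tendsto_atTop_add_const_right _ 1 tendsto_id
  have hlog : Tendsto (fun x : ℝ ↦ n - a * log (x + 1)) atTop atBot :=
    tendsto_atBot_add_const_left _ _
      (tendsto_neg_atTop_atBot.comp ((tendsto_log_atTop.comp hx1).const_mul_atTop ha))
  have hexp := tendsto_exp_atBot.comp
    (tendsto_atBot_add_const_right _ (-(n : ℝ)) (hx1.atTop_mul_atBot₀ hlog))
  refine hexp.congr fun x ↦ ?_
  simp only [Function.comp_apply, ← exp_nat_mul, ← exp_add]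
  ring_nf

end Real

theorem PhragmenLindelof.eqOn_zero_of_bounded_of_superexponential_decay {E : Type*}
    [NormedAddCommGroup E] [NormedSpace ℂ E] {f : ℂ → E}
    (hd : DiffContOnCl ℂ f {z | 0 < z.re}) {M : ℝ} (hM : ∀ z : ℂ, 0 ≤ z.re → ‖f z‖ ≤ M)
    (hre : SuperpolynomialDecay atTop Real.exp fun x : ℝ ↦ ‖f x‖) :
    EqOn f 0 {z | 0 ≤ z.re} := by
  refine eq_zero_on_right_half_plane_of_superexponential_decay hd
    ⟨0, two_pos, 0, .of_bound M ?_⟩ hre ⟨M, fun x ↦ hM _ (by simp)⟩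
  filter_upwards [mem_inf_of_right (mem_principal_self _)] with z hz
  simpa using hM z (le_of_lt hz)

namespace Complex

variable {E : Type*} [NormedAddCommGroup E] [NormedSpace ℂ E]

theorem norm_exp_neg_mul_mul_log_add_one_le {a : ℝ} (ha : 0 ≤ a) {z : ℂ} (hz : 0 ≤ z.re) :
    ‖exp (-a * ((z + 1) * log (z + 1)))‖ ≤ Real.exp (a * (π / 2) * |z.im|) := by
  set w := z + 1
  have hw : 1 ≤ w.re := by simp [w, hz]
  have hlog : 0 ≤ Real.log ‖w‖ := Real.log_nonneg (hw.trans (re_le_norm w))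
  have harg : w.im * arg w ≤ |z.im| * (π / 2) := by
    refine (le_abs_self _).trans ?_
    rw [abs_mul, show w.im = z.im by simp [w]]
    exact mul_le_mul_of_nonneg_left (abs_arg_le_pi_div_two_iff.2 (by linarith)) (abs_nonneg _)
  rw [norm_exp, Real.exp_le_exp, neg_mul, neg_re, re_ofReal_mul, mul_re, log_re, log_im]
  nlinarith [mul_nonneg (mul_nonneg ha (by linarith : (0 : ℝ) ≤ w.re)) hlog]

theorem norm_exp_neg_mul_mul_log_add_one_ofReal (a : ℝ) {x : ℝ} (hx : 0 ≤ x) :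
    ‖exp (-a * ((x + 1) * log (x + 1)))‖ = Real.exp (-a * ((x + 1) * Real.log (x + 1))) := by
  rw [norm_exp, ← ofReal_one, ← ofReal_add, ← ofReal_log (by linarith), ← ofReal_mul,
    ← ofReal_neg, ← ofReal_mul, ofReal_re]

theorem differentiableOn_exp_neg_mul_mul_log_add_one (a : ℝ) :
    DifferentiableOn ℂ (fun z ↦ exp (-a * ((z + 1) * log (z + 1)))) {z | -1 < z.re} :=
  fun z hz ↦ by
    have : z + 1 ∈ slitPlane := Or.inl (by simp only [add_re, one_re]; linarith [hz.out])
    exact (((differentiableAt_id.add_const 1).mul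
      ((differentiableAt_id.add_const 1).clog this)).const_mul _).cexp.differentiableWithinAt

theorem eqOn_zero_of_norm_le_exp_mul_abs_im {f : ℂ → E} {K s : ℝ} (hs : s < 0)
    (hfd : DifferentiableOn ℂ f {z | -1 < z.re})
    (hf : ∀ z : ℂ, 0 ≤ z.re → ‖f z‖ ≤ K * Real.exp (s * |z.im|)) :
    EqOn f 0 {z | 0 ≤ z.re} := by
  set a := -s / (π / 2)
  have ha : 0 < a := div_pos (neg_pos.2 hs) (by positivity)
  set D : ℂ → ℂ := fun z ↦ exp (-a * ((z + 1) * log (z + 1)))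
  have hK : 0 ≤ K := by simpa using (norm_nonneg _).trans (hf 0 le_rfl)
  have hbound : ∀ z : ℂ, 0 ≤ z.re → ‖D z • f z‖ ≤ K := fun z hz ↦ by
    rw [norm_smul]
    calc ‖D z‖ * ‖f z‖ ≤ Real.exp (a * (π / 2) * |z.im|) * (K * Real.exp (s * |z.im|)) :=
          mul_le_mul (norm_exp_neg_mul_mul_log_add_one_le ha.le hz) (hf z hz) (norm_nonneg _)
            (by positivity)
      _ = K := by
        rw [mul_left_comm, ← Real.exp_add, div_mul_cancel₀ _ (by positivity)]
        simp
  have hdecay : SuperpolynomialDecay atTop Real.exp fun x : ℝ ↦ ‖D x • f x‖ := by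
    refine ((Real.superpolynomialDecay_exp_neg_mul_mul_log_add_one ha).mul_const K)
      |>.trans_eventually_abs_le ?_
    filter_upwards [eventually_ge_atTop 0] with x hx
    simp only [Function.comp_apply, norm_smul, D, norm_exp_neg_mul_mul_log_add_one_ofReal a hx]
    rw [abs_of_nonneg (by positivity), abs_of_nonneg (by positivity)]
    refine mul_le_mul_of_nonneg_left ?_ (Real.exp_pos _).le
    simpa using hf x (by simpa using hx)
  have hdiff : DifferentiableOn ℂ (fun z ↦ D z • f z) (closure {z | 0 < z.re}) :=
    ((differentiableOn_exp_neg_mul_mul_log_add_one a).smul hfd).mono fun z hz ↦ by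
      rw [closure_setOfPred_lt_re] at hz
      show -1 < z.re
      linarith [hz.out]
  have hzero := PhragmenLindelof.eqOn_zero_of_bounded_of_superexponential_decay
    hdiff.diffContOnCl hbound hdecay
  exact fun z hz ↦ (smul_eq_zero.1 (hzero hz)).resolve_left (exp_ne_zero _)

theorem norm_sin_sq (z : ℂ) : ‖sin z‖ ^ 2 = Real.sin z.re ^ 2 + Real.sinh z.im ^ 2 := by
  have hre : (sin z).re = Real.sin z.re * Real.cosh z.im := by
    rw [sin_eq]; simp [← ofReal_sin, ← ofReal_cos, ← ofReal_cosh, ← ofReal_sinh]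
  have him : (sin z).im = Real.cos z.re * Real.sinh z.im := by
    rw [sin_eq]; simp [← ofReal_sin, ← ofReal_cos, ← ofReal_cosh, ← ofReal_sinh]
  rw [Complex.sq_norm, normSq_apply, hre, him]
  nlinarith [Real.sin_sq_add_cos_sq z.re, Real.cosh_sq z.im]

theorem abs_sinh_im_le_norm_sin (z : ℂ) : |Real.sinh z.im| ≤ ‖sin z‖ :=
  abs_le_of_sq_le_sq (by nlinarith [norm_sin_sq z, sq_nonneg (Real.sin z.re)]) (norm_nonneg _)

theorem abs_sin_re_le_norm_sin (z : ℂ) : |Real.sin z.re| ≤ ‖sin z‖ :=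
  abs_le_of_sq_le_sq (by nlinarith [norm_sin_sq z, sq_nonneg (Real.sinh z.im)]) (norm_nonneg _)

theorem norm_sin_pi_mul_sub_intCast (z : ℂ) (n : ℤ) : ‖sin (π * (z - n))‖ = ‖sin (π * z)‖ := by
  rw [mul_sub, mul_comm (π : ℂ) n, sin_antiperiodic.sub_int_mul_eq]
  simp

theorem sin_pi_mul_eq_zero_iff {z : ℂ} : sin (π * z) = 0 ↔ ∃ n : ℤ, z = n := by
  rw [sin_eq_zero_iff]
  refine exists_congr fun n ↦ ⟨fun h ↦ ?_, fun h ↦ by rw [h, mul_comm]⟩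
  rw [mul_comm] at h
  exact mul_right_cancel₀ (ofReal_ne_zero.2 Real.pi_ne_zero) h

theorem exists_mul_exp_le_norm_sin_pi_mul :
    ∃ c > 0, ∀ z : ℂ, (∀ n : ℤ, 1 / 4 ≤ ‖z - n‖) → c * Real.exp (π * |z.im|) ≤ ‖sin (π * z)‖ := by
  have hpos : 0 < 1 - Real.exp (-2 * (π / 8)) := by
    rw [sub_pos, Real.exp_lt_one_iff]; linarith [Real.pi_pos]
  refine ⟨min (Real.exp (-(π / 8)) / 4) ((1 - Real.exp (-2 * (π / 8))) / 2), by positivity,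
    fun z hz ↦ ?_⟩
  set w := z - round z.re
  have hwre : |w.re| ≤ 1 / 2 := by simpa [w] using abs_sub_round z.re
  have hwim : w.im = z.im := by simp [w]
  have hw : 1 / 4 ≤ |w.re| + |w.im| := (hz _).trans (norm_le_abs_re_add_abs_im w)
  rw [← norm_sin_pi_mul_sub_intCast z (round z.re), ← hwim]
  rcases le_or_gt (1 / 8) |w.im| with him | him
  · calc _ ≤ (1 - Real.exp (-2 * (π / 8))) / 2 * Real.exp (π * |w.im|) := by
          gcongr; exact min_le_right _ _
      _ ≤ Real.sinh (π * |w.im|) := Real.mul_exp_le_sinh (by nlinarith [Real.pi_pos])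
      _ = |Real.sinh (π * w).im| := by
        rw [Real.abs_sinh, im_ofReal_mul, abs_mul, abs_of_pos Real.pi_pos]
      _ ≤ ‖sin (π * w)‖ := abs_sinh_im_le_norm_sin _
  · calc _ ≤ Real.exp (-(π / 8)) / 4 * Real.exp (π / 8) := by
          gcongr
          · exact min_le_left _ _
          · nlinarith [Real.pi_pos]
      _ = 1 / 4 := by rw [div_mul_eq_mul_div, ← Real.exp_add]; simp
      _ ≤ 2 * |w.re| := by linarith
      _ ≤ |Real.sin (π * w).re| := by
        rw [re_ofReal_mul]; exact Real.two_mul_abs_le_abs_sin_pi_mul hwre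
      _ ≤ ‖sin (π * w)‖ := abs_sin_re_le_norm_sin _

theorem exists_differentiableOn_eq_div {f g : ℂ → ℂ} {U : Set ℂ}
    (hf : Differentiable ℂ f) (hg : Differentiable ℂ g)
    (hfg : ∀ a ∈ U, g a = 0 → f a = 0 ∧ deriv g a ≠ 0) :
    ∃ q : ℂ → ℂ, DifferentiableOn ℂ q U ∧ ∀ z, g z ≠ 0 → q z = f z / g z := by
  refine ⟨fun z ↦ if g z = 0 then deriv f z / deriv g z else f z / g z,
    fun a ha ↦ DifferentiableAt.differentiableWithinAt ?_, fun z hz ↦ if_neg hz⟩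
  by_cases hga : g a = 0
  · obtain ⟨hfa, hg'a⟩ := hfg a ha hga
    have hslope : ∀ φ : ℂ → ℂ, Differentiable ℂ φ → DifferentiableAt ℂ (dslope φ a) a :=
      fun φ hφ ↦ ((differentiableOn_dslope univ_mem).2 hφ.differentiableOn).differentiableAt univ_mem
    have hg'a : dslope g a a ≠ 0 := by rwa [dslope_same]
    have hfactor : ∀ φ : ℂ → ℂ, φ a = 0 → ∀ z, φ z = (z - a) * dslope φ a z := fun φ hφ z ↦ by
      rw [← smul_eq_mul, sub_smul_dslope, hφ, sub_zero]
    refine ((hslope f hf).div (hslope g hg) hg'a).congr_of_eventuallyEq ?_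
    filter_upwards [(hslope g hg).continuousAt.eventually_ne hg'a] with z hz
    rcases eq_or_ne z a with rfl | hza
    · simp [hga, dslope_same]
    · have hza' : z - a ≠ 0 := sub_ne_zero.2 hza
      rw [hfactor g hga z, hfactor f hfa z, if_neg (mul_ne_zero hza' hz),
        mul_div_mul_left _ _ hza', Pi.div_apply]
  · refine ((hf a).div (hg a) hga).congr_of_eventuallyEq ?_
    filter_upwards [hg.continuous.continuousAt.eventually_ne hga] with z hz
    rw [if_neg hz, Pi.div_apply]

theorem exists_differentiableOn_eq_div_sin_pi_mul {h : ℂ → ℂ} (hh : Differentiable ℂ h)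
    (hzero : ∀ n : ℕ, h n = 0) :
    ∃ q : ℂ → ℂ, DifferentiableOn ℂ q {z | -1 < z.re} ∧
      ∀ z, sin (π * z) ≠ 0 → q z = h z / sin (π * z) := by
  refine exists_differentiableOn_eq_div hh (by fun_prop) fun a ha hsin ↦ ⟨?_, ?_⟩
  · obtain ⟨k, rfl⟩ := sin_pi_mul_eq_zero_iff.1 hsin
    lift k to ℕ using by
      have : (-1 : ℝ) < k := by simpa using ha
      have : (-1 : ℤ) < k := by exact_mod_cast this
      omega
    exact_mod_cast hzero k
  · have hderiv : HasDerivAt (fun z ↦ sin (π * z)) (cos (π * a) * π) a := by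
      simpa using ((hasDerivAt_id a).const_mul (π : ℂ)).csin
    have hcos : cos (π * a) ≠ 0 := fun hcos ↦ by
      simpa [hsin, hcos] using sin_sq_add_cos_sq (π * a)
    rw [hderiv.deriv]
    exact mul_ne_zero hcos (ofReal_ne_zero.2 Real.pi_ne_zero)

theorem exists_norm_div_sin_pi_mul_le {h : ℂ → ℂ} {C r : ℝ}
    (hC : ∀ z, ‖h z‖ ≤ C * Real.exp (r * |z.im|)) :
    ∃ K ≥ 0, ∀ z : ℂ, (∀ n : ℤ, 1 / 4 ≤ ‖z - n‖) →
      ‖h z / sin (π * z)‖ ≤ K * Real.exp ((r - π) * |z.im|) := by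
  obtain ⟨c, hc, hsin⟩ := exists_mul_exp_le_norm_sin_pi_mul
  have hC0 : 0 ≤ C := by simpa using (norm_nonneg _).trans (hC 0)
  refine ⟨C / c, by positivity, fun z hz ↦ ?_⟩
  rw [norm_div, sub_mul, Real.exp_sub, ← mul_div_mul_comm]
  exact div_le_div₀ (by positivity) (hC z) (by positivity) (hsin z hz)

theorem forall_le_norm_sub_intCast_of_norm_sub_eq {w : ℂ} {n : ℤ} (hw : ‖w - n‖ = 1 / 4)
    (m : ℤ) : 1 / 4 ≤ ‖w - m‖ := by
  rcases eq_or_ne m n with rfl | hmn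
  · exact hw.ge
  have hdist : 1 ≤ ‖(n : ℂ) - m‖ := by
    rw [← Int.cast_sub, norm_intCast]
    exact_mod_cast Int.one_le_abs (sub_ne_zero.2 hmn.symm)
  have := norm_sub_le_norm_sub_add_norm_sub (n : ℂ) w m
  rw [norm_sub_rev (n : ℂ) w, hw] at this
  linarith

theorem forall_le_norm_sub_intCast_of_re_nonneg {z : ℂ} (hz : 0 ≤ z.re)
    (hn : ∀ n : ℕ, 1 / 4 < ‖z - n‖) (m : ℤ) : 1 / 4 ≤ ‖z - m‖ := by
  rcases le_or_gt 0 m with hm | hm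
  · lift m to ℕ using hm
    exact_mod_cast (hn m).le
  · have hm' : (m : ℝ) ≤ -1 := by exact_mod_cast Int.le_sub_one_of_lt hm
    have := re_le_norm (z - m)
    simp only [sub_re, intCast_re] at this
    linarith

theorem exists_norm_le_of_eq_div_sin_pi_mul {h q : ℂ → ℂ} {C r : ℝ} (hr : r < π)
    (hC : ∀ z, ‖h z‖ ≤ C * Real.exp (r * |z.im|)) (hqd : DifferentiableOn ℂ q {z | -1 < z.re})
    (hq : ∀ z, sin (π * z) ≠ 0 → q z = h z / sin (π * z)) :
    ∃ K, ∀ z : ℂ, 0 ≤ z.re → ‖q z‖ ≤ K * Real.exp ((r - π) * |z.im|) := by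
  obtain ⟨K, hK0, hK⟩ := exists_norm_div_sin_pi_mul_le hC
  have hfar : ∀ z : ℂ, (∀ n : ℤ, 1 / 4 ≤ ‖z - n‖) → ‖q z‖ ≤ K * Real.exp ((r - π) * |z.im|) :=
    fun z hz ↦ by
      rw [hq z fun h0 ↦ ?_]
      · exact hK z hz
      obtain ⟨n, rfl⟩ := sin_pi_mul_eq_zero_iff.1 h0
      exact absurd (hz n) (by norm_num)
  have hnear : ∀ n : ℕ, ∀ z ∈ closedBall (n : ℂ) (1 / 4), ‖q z‖ ≤ K := by
    intro n z hz
    have hsub : closedBall (n : ℂ) (1 / 4) ⊆ {z | -1 < z.re} := fun w hw ↦ by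
      have := (abs_re_le_norm (w - n)).trans (mem_closedBall_iff_norm.1 hw)
      simp only [sub_re, natCast_re, abs_le] at this
      show -1 < w.re; linarith [(n.cast_nonneg : (0 : ℝ) ≤ n)]
    refine norm_le_of_forall_mem_frontier_norm_le isBounded_ball (hqd.diffContOnCl_ball hsub)
      (fun w hw ↦ ?_) (by rwa [closure_ball _ (by norm_num)])
    rw [frontier_ball _ (by norm_num), mem_sphere_iff_norm, ← Int.cast_natCast] at hw
    refine (hfar w (forall_le_norm_sub_intCast_of_norm_sub_eq hw)).trans
      (mul_le_of_le_one_right hK0 (Real.exp_le_one_iff.2 ?_))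
    exact mul_nonpos_of_nonpos_of_nonneg (by linarith) (abs_nonneg _)
  refine ⟨K * Real.exp ((π - r) / 4), fun z hz ↦ ?_⟩
  rw [mul_assoc, ← Real.exp_add]
  by_cases hn : ∃ n : ℕ, ‖z - n‖ ≤ 1 / 4
  · obtain ⟨n, hn⟩ := hn
    have him : |z.im| ≤ 1 / 4 := by simpa using (abs_im_le_norm (z - n)).trans hn
    refine (hnear n z (mem_closedBall_iff_norm.2 hn)).trans
      (le_mul_of_one_le_right hK0 (Real.one_le_exp ?_))
    nlinarith
  · simp only [not_exists, not_le] at hn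
    refine (hfar z (forall_le_norm_sub_intCast_of_re_nonneg hz hn)).trans
      (mul_le_mul_of_nonneg_left (Real.exp_le_exp.2 ?_) hK0)
    linarith

theorem eq_zero_of_norm_le_exp_mul_abs_im_of_forall_natCast_eq_zero {h : ℂ → ℂ} {C r : ℝ}
    (hh : Differentiable ℂ h) (hr : r < π) (hC : ∀ z, ‖h z‖ ≤ C * Real.exp (r * |z.im|))
    (hzero : ∀ n : ℕ, h n = 0) : h = 0 := by
  obtain ⟨q, hqd, hq⟩ := exists_differentiableOn_eq_div_sin_pi_mul hh hzero
  obtain ⟨K, hK⟩ := exists_norm_le_of_eq_div_sin_pi_mul hr hC hqd hq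
  have hq0 := eqOn_zero_of_norm_le_exp_mul_abs_im (sub_neg.2 hr) hqd hK
  have hsin : ∀ᶠ z in 𝓝 (1 / 2 : ℂ), sin (π * z) ≠ 0 :=
    (by fun_prop : Continuous fun z : ℂ ↦ sin (π * z)).continuousAt.eventually_ne
      (by rw [mul_one_div, sin_pi_div_two]; exact one_ne_zero)
  have hlocal : h =ᶠ[𝓝 (1 / 2 : ℂ)] 0 := by
    filter_upwards [hsin, (isOpen_lt continuous_const continuous_re).mem_nhds
      (show (0 : ℝ) < (1 / 2 : ℂ).re by norm_num)] with z hs hre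
    have := hq z hs
    rw [hq0 (le_of_lt hre)] at this
    exact (div_eq_zero_iff.1 this.symm).resolve_right hs
  exact (analyticOnNhd_univ_iff_differentiable.2 hh).eq_of_eventuallyEq analyticOnNhd_const hlocal

end Complex

theorem entire_exp_type_eq_of_eq_on_nat_general
    (r : ℝ) (hrpi : r < Real.pi)
    (g₁ g₂ : ℂ → ℂ) (hg₁ : Differentiable ℂ g₁) (hg₂ : Differentiable ℂ g₂)
    (hdecay₁ : ∀ k : ℕ, ∃ C : ℝ, 0 < C ∧ ∀ lam : ℂ,
      ‖g₁ lam‖ ≤ C * (1 + ‖lam‖) ^ (-(k : ℤ)) * Real.exp (r * |lam.im|))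
    (hdecay₂ : ∀ k : ℕ, ∃ C : ℝ, 0 < C ∧ ∀ lam : ℂ,
      ‖g₂ lam‖ ≤ C * (1 + ‖lam‖) ^ (-(k : ℤ)) * Real.exp (r * |lam.im|))
    (heq : ∀ l : ℕ, g₁ l = g₂ l) :
    g₁ = g₂ := by
  obtain ⟨C₁, -, hC₁⟩ := hdecay₁ 0
  obtain ⟨C₂, -, hC₂⟩ := hdecay₂ 0
  refine sub_eq_zero.1 <| Complex.eq_zero_of_norm_le_exp_mul_abs_im_of_forall_natCast_eq_zero
    (hg₁.sub hg₂) hrpi (C := C₁ + C₂) (fun z ↦ ?_) fun n ↦ sub_eq_zero.2 (heq n)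
  simpa [add_mul] using norm_sub_le_of_le (hC₁ z) (hC₂ z)

/-- **Uniqueness in the local Paley–Wiener theorem for `S²`.** Let `0 < r < π`. Entire
functions `g₁, g₂` satisfying `|gⱼ(λ)| ≤ C_k (1+|λ|)^{-k} e^{r|Im λ|}` for every `k` and
agreeing on the nonnegative integers are equal. -/
theorem entire_exp_type_eq_of_eq_on_nat
    (r : ℝ) (hr0 : 0 < r) (hrpi : r < Real.pi)
    (g₁ g₂ : ℂ → ℂ) (hg₁ : Differentiable ℂ g₁) (hg₂ : Differentiable ℂ g₂)
    (hdecay₁ : ∀ k : ℕ, ∃ C : ℝ, 0 < C ∧ ∀ lam : ℂ,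
      ‖g₁ lam‖ ≤ C * (1 + ‖lam‖) ^ (-(k : ℤ)) * Real.exp (r * |lam.im|))
    (hdecay₂ : ∀ k : ℕ, ∃ C : ℝ, 0 < C ∧ ∀ lam : ℂ,
      ‖g₂ lam‖ ≤ C * (1 + ‖lam‖) ^ (-(k : ℤ)) * Real.exp (r * |lam.im|))
    (heq : ∀ l : ℕ, g₁ l = g₂ l) :
    g₁ = g₂ :=
  entire_exp_type_eq_of_eq_on_nat_general r hrpi g₁ g₂ hg₁ hg₂ hdecay₁ hdecay₂ heq
end
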